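/- arXiv:1304.6633 — 2 statements merged into one kernel-verified Lean document; each statement's English description precedes it below -/
import Mathlib

section
/- Let h : [a,b] → X be a map into a metric space and p ≥ 1. Define ∂_h^(p)(x,y) = (1/2)[(d(h(x), h((x+y)/2))/((y−x)/2))^p + (d(h((x+y)/2), h(y))/((y−x)/2))^p] − (d(h(x),h(y))/(y−x))^p for x < y. Then for every m ∈ ℕ, the sum over k from 0 to m and over dyadic subintervals I of [a,b] of generation k of |I|·∂_h^(p)(a(I),b(I)) is at most 2(b−a)·L^p, where L is any constant satisfying d(h(x),h(y)) ≤ L|x−y| for all x,y ∈ [a,b] with |x−y| ≥ 2^{−m−1}(b−a), and also d(h(x),h(y)) ≤ L·2^{−m−1}(b−a) when |x−y| ≤ 2^{−m−1}(b−a). -/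
/-- The `p`-th power midpoint defect `∂_h^(p)(x,y)` of a map `h : ℝ → X` into a
metric space, measuring the failure of `h` to be a constant-speed geodesic on `[x,y]`. -/
noncomputable def pDefect {X : Type*} [MetricSpace X] (h : ℝ → X) (p x y : ℝ) : ℝ :=
  (1 / 2) * ((dist (h x) (h ((x + y) / 2)) / ((y - x) / 2)) ^ p
      + (dist (h ((x + y) / 2)) (h y) / ((y - x) / 2)) ^ p)
    - (dist (h x) (h y) / (y - x)) ^ p

private lemma sum_range_two_mul {M : Type*} [AddCommMonoid M] (f : ℕ → M) (n : ℕ) :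
    ∑ i ∈ Finset.range (2 * n), f i
      = ∑ i ∈ Finset.range n, (f (2 * i) + f (2 * i + 1)) := by
  induction n with
  | zero => simp
  | succ n ih =>
    rw [Nat.mul_succ, Finset.sum_range_succ, Finset.sum_range_succ, Finset.sum_range_succ, ih,
      add_assoc]

private lemma sum_range_two_pow_succ {M : Type*} [AddCommMonoid M] (f : ℕ → M) (n : ℕ) :
    ∑ i ∈ Finset.range (2 ^ (n + 1)), f i
      = ∑ i ∈ Finset.range (2 ^ n), (f (2 * i) + f (2 * i + 1)) := by
  rw [pow_succ, mul_comm, sum_range_two_mul]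

/-- Telescoping (Carleson packing) bound: the sum over the first `m+1` dyadic
generations of `[a,b]` of `|I| · ∂_h^(p)(a(I),b(I))` is at most `2(b-a)·L^p`,
where `L` controls `h` at scales ≥ `2^{-m-1}(b-a)` and bounds oscillation below
that scale. -/
theorem dyadic_telescoping_sum {X : Type*} [MetricSpace X] (h : ℝ → X)
    (p a b L : ℝ) (hp : 1 ≤ p) (hab : a < b) (hL : 0 ≤ L) (m : ℕ)
    (hLip : ∀ x ∈ Set.Icc a b, ∀ y ∈ Set.Icc a b,
      (b - a) / 2 ^ (m + 1) ≤ |x - y| → dist (h x) (h y) ≤ L * |x - y|)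
    (hSmall : ∀ x ∈ Set.Icc a b, ∀ y ∈ Set.Icc a b,
      |x - y| ≤ (b - a) / 2 ^ (m + 1) → dist (h x) (h y) ≤ L * ((b - a) / 2 ^ (m + 1))) :
    ∑ k ∈ Finset.range (m + 1), ∑ i ∈ Finset.range (2 ^ k),
        ((b - a) / 2 ^ k) *
          pDefect h p (a + (i : ℝ) * ((b - a) / 2 ^ k)) (a + ((i : ℝ) + 1) * ((b - a) / 2 ^ k))
      ≤ 2 * (b - a) * L ^ p := by
  have hba : (0:ℝ) < b - a := sub_pos.2 hab
  have hp0 : (0:ℝ) ≤ p := le_trans zero_le_one hp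
  -- the p-energy at generation k
  set S : ℕ → ℝ := fun k => ∑ i ∈ Finset.range (2 ^ k),
      ((b - a) / 2 ^ k) *
        (dist (h (a + (i : ℝ) * ((b - a) / 2 ^ k))) (h (a + ((i : ℝ) + 1) * ((b - a) / 2 ^ k)))
          / ((b - a) / 2 ^ k)) ^ p with hSdef
  have key : ∀ k : ℕ, ∑ i ∈ Finset.range (2 ^ k),
      ((b - a) / 2 ^ k) *
        pDefect h p (a + (i : ℝ) * ((b - a) / 2 ^ k)) (a + ((i : ℝ) + 1) * ((b - a) / 2 ^ k))
      = S (k + 1) - S k := by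
    intro k
    have hℓ : (0:ℝ) < (b - a) / 2 ^ k := by positivity
    set ℓ : ℝ := (b - a) / 2 ^ k with hℓdef
    have hhalf : (b - a) / 2 ^ (k + 1) = ℓ / 2 := by
      rw [hℓdef, pow_succ]; ring
    rw [hSdef]
    simp only
    rw [sum_range_two_pow_succ, ← Finset.sum_sub_distrib]
    refine Finset.sum_congr rfl fun i _ => ?_
    have e1 : a + ((2 * i : ℕ) : ℝ) * ((b - a) / 2 ^ (k + 1)) = a + (i : ℝ) * ℓ := by
      rw [hhalf]; push_cast; ring
    have e2 : a + (((2 * i : ℕ) : ℝ) + 1) * ((b - a) / 2 ^ (k + 1))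
        = (a + (i : ℝ) * ℓ + (a + ((i : ℝ) + 1) * ℓ)) / 2 := by
      rw [hhalf]; push_cast; ring
    have e3 : a + ((2 * i + 1 : ℕ) : ℝ) * ((b - a) / 2 ^ (k + 1))
        = (a + (i : ℝ) * ℓ + (a + ((i : ℝ) + 1) * ℓ)) / 2 := by
      rw [hhalf]; push_cast; ring
    have e4 : a + (((2 * i + 1 : ℕ) : ℝ) + 1) * ((b - a) / 2 ^ (k + 1))
        = a + ((i : ℝ) + 1) * ℓ := by
      rw [hhalf]; push_cast; ring
    have e5 : (a + ((i : ℝ) + 1) * ℓ) - (a + (i : ℝ) * ℓ) = ℓ := by ring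
    rw [e1, e2, e3, e4, hhalf, pDefect, e5]
    ring
  calc ∑ k ∈ Finset.range (m + 1), ∑ i ∈ Finset.range (2 ^ k),
        ((b - a) / 2 ^ k) *
          pDefect h p (a + (i : ℝ) * ((b - a) / 2 ^ k)) (a + ((i : ℝ) + 1) * ((b - a) / 2 ^ k))
      = S (m + 1) - S 0 := by
        rw [Finset.sum_congr rfl fun k _ => key k, Finset.sum_range_sub]
    _ ≤ S (m + 1) := by
        have h0 : 0 ≤ S 0 := by
          rw [hSdef]
          refine Finset.sum_nonneg fun i _ => ?_
          positivity
        linarith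
    _ ≤ (b - a) * L ^ p := by
        rw [hSdef]
        simp only
        set ℓ : ℝ := (b - a) / 2 ^ (m + 1) with hℓdef
        have hℓ : (0:ℝ) < ℓ := by rw [hℓdef]; positivity
        have hmem : ∀ j : ℕ, j ≤ 2 ^ (m + 1) → a + (j : ℝ) * ℓ ∈ Set.Icc a b := by
          intro j hj
          constructor
          · nlinarith [hℓ.le, Nat.cast_nonneg (α := ℝ) j]
          · have : (j : ℝ) ≤ 2 ^ (m + 1) := by exact_mod_cast hj
            have h2 : (j : ℝ) * ℓ ≤ (2 : ℝ) ^ (m + 1) * ℓ := by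
              exact mul_le_mul_of_nonneg_right this hℓ.le
            have h3 : (2 : ℝ) ^ (m + 1) * ℓ = b - a := by
              rw [hℓdef]; field_simp
            linarith
        have hterm : ∀ i ∈ Finset.range (2 ^ (m + 1)),
            ℓ * (dist (h (a + (i : ℝ) * ℓ)) (h (a + ((i : ℝ) + 1) * ℓ)) / ℓ) ^ p ≤ ℓ * L ^ p := by
          intro i hi
          have hi' : i < 2 ^ (m + 1) := Finset.mem_range.1 hi
          have hx := hmem i hi'.le
          have hy : a + ((i : ℝ) + 1) * ℓ ∈ Set.Icc a b := by
            have := hmem (i + 1) hi'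
            push_cast at this
            exact this
          have habs : |(a + (i : ℝ) * ℓ) - (a + ((i : ℝ) + 1) * ℓ)| = ℓ := by
            rw [show (a + (i : ℝ) * ℓ) - (a + ((i : ℝ) + 1) * ℓ) = -ℓ by ring, abs_neg,
              abs_of_pos hℓ]
          have hd : dist (h (a + (i : ℝ) * ℓ)) (h (a + ((i : ℝ) + 1) * ℓ)) ≤ L * ℓ :=
            hSmall _ hx _ hy (le_of_eq habs)
          have hq : dist (h (a + (i : ℝ) * ℓ)) (h (a + ((i : ℝ) + 1) * ℓ)) / ℓ ≤ L :=
            (div_le_iff₀ hℓ).2 (by linarith [hd])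
          have := Real.rpow_le_rpow (div_nonneg dist_nonneg hℓ.le) hq hp0
          exact mul_le_mul_of_nonneg_left this hℓ.le
        calc ∑ i ∈ Finset.range (2 ^ (m + 1)),
              ℓ * (dist (h (a + (i : ℝ) * ℓ)) (h (a + ((i : ℝ) + 1) * ℓ)) / ℓ) ^ p
            ≤ ∑ _i ∈ Finset.range (2 ^ (m + 1)), ℓ * L ^ p := Finset.sum_le_sum hterm
          _ = (b - a) * L ^ p := by
              rw [Finset.sum_const, Finset.card_range, nsmul_eq_mul, hℓdef]
              push_cast
              field_simp
    _ ≤ 2 * (b - a) * L ^ p := by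
        have hLp : 0 ≤ L ^ p := Real.rpow_nonneg hL p
        nlinarith
end

section
/- Let (X, d_X) be a CAT(0) space, ε ∈ (0,1), L > 0, and let γ : [0,1] → X satisfy |d_X(γ(s), γ(t)) − |t−s|·L| ≤ ε·L for all s, t ∈ [0,1]. Let γ₀ : [0,1] → X be the constant-speed minimal geodesic from γ(0) to γ(1). Then there is a universal constant C > 0 (independent of X, γ, ε, L) such that sup_{t ∈ [0,1]} d_X(γ(t), γ₀(t)) ≤ C·√ε·L. -/
universe u

/-- A metric space is CAT(0) if every pair of points is joined by a constant-speed
geodesic, and along any such geodesic the squared distance to an arbitrary point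
satisfies the Euclidean comparison (convexity) inequality. -/
def CAT0 (X : Type*) [MetricSpace X] : Prop :=
  (∀ x y : X, ∃ γ : ℝ → X, γ 0 = x ∧ γ 1 = y ∧
    ∀ s ∈ Set.Icc (0 : ℝ) 1, ∀ t ∈ Set.Icc (0 : ℝ) 1,
      dist (γ s) (γ t) = |s - t| * dist x y) ∧
  (∀ γ : ℝ → X,
    (∀ s ∈ Set.Icc (0 : ℝ) 1, ∀ t ∈ Set.Icc (0 : ℝ) 1,
      dist (γ s) (γ t) = |s - t| * dist (γ 0) (γ 1)) →
    ∀ z : X, ∀ t ∈ Set.Icc (0 : ℝ) 1,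
      dist z (γ t) ^ 2
        ≤ (1 - t) * dist z (γ 0) ^ 2 + t * dist z (γ 1) ^ 2
            - t * (1 - t) * dist (γ 0) (γ 1) ^ 2)

set_option maxHeartbeats 1000000 in
/-- In a CAT(0) space, an almost-geodesic (deviating from a constant-speed
parametrization of speed `L` by at most `εL`) is uniformly `C√ε·L`-close to the
constant-speed geodesic joining its endpoints, for a universal constant `C`. -/
theorem cat0_close_to_geodesic :
    ∃ C : ℝ, 0 < C ∧
      ∀ (X : Type u) [MetricSpace X], CAT0 X →
        ∀ (ε L : ℝ), ε ∈ Set.Ioo (0 : ℝ) 1 → 0 < L →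
          ∀ γ γ₀ : ℝ → X,
            (∀ s ∈ Set.Icc (0 : ℝ) 1, ∀ t ∈ Set.Icc (0 : ℝ) 1,
              |dist (γ s) (γ t) - |t - s| * L| ≤ ε * L) →
            γ₀ 0 = γ 0 → γ₀ 1 = γ 1 →
            (∀ s ∈ Set.Icc (0 : ℝ) 1, ∀ t ∈ Set.Icc (0 : ℝ) 1,
              dist (γ₀ s) (γ₀ t) = |s - t| * dist (γ 0) (γ 1)) →
            ∀ t ∈ Set.Icc (0 : ℝ) 1, dist (γ t) (γ₀ t) ≤ C * Real.sqrt ε * L := by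
  refine ⟨2, by norm_num, ?_⟩
  intro X _ hX ε L hε hL γ γ₀ hγ h0 h1 hgeo t ht
  obtain ⟨ht0, ht1⟩ := ht
  have h01 : (0:ℝ) ∈ Set.Icc (0:ℝ) 1 := by constructor <;> norm_num
  have h11 : (1:ℝ) ∈ Set.Icc (0:ℝ) 1 := by constructor <;> norm_num
  -- the comparison inequality along γ₀ with z = γ t
  have hgeo' : ∀ s ∈ Set.Icc (0:ℝ) 1, ∀ u ∈ Set.Icc (0:ℝ) 1,
      dist (γ₀ s) (γ₀ u) = |s - u| * dist (γ₀ 0) (γ₀ 1) := by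
    intro s hs u hu
    rw [h0, h1]
    exact hgeo s hs u hu
  have key := hX.2 γ₀ hgeo' (γ t) t ⟨ht0, ht1⟩
  rw [h0, h1] at key
  -- bounds from the almost-geodesic hypothesis
  have hA := hγ 0 h01 t ⟨ht0, ht1⟩
  have hB := hγ t ⟨ht0, ht1⟩ 1 h11
  have hC := hγ 0 h01 1 h11
  rw [show |t - 0| = t by rw [sub_zero]; exact abs_of_nonneg ht0] at hA
  rw [show |1 - t| = 1 - t by exact abs_of_nonneg (by linarith)] at hB
  rw [show |(1:ℝ) - 0| = 1 by norm_num] at hC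
  have hA' : dist (γ t) (γ 0) ≤ t * L + ε * L := by
    rw [dist_comm]
    have := abs_le.mp hA
    linarith [this.2]
  have hB' : dist (γ t) (γ 1) ≤ (1 - t) * L + ε * L := by
    have := abs_le.mp hB
    linarith [this.2]
  have hC' : L - ε * L ≤ dist (γ 0) (γ 1) := by
    have := abs_le.mp hC
    linarith [this.1]
  have hd0 : (0:ℝ) ≤ dist (γ t) (γ 0) := dist_nonneg
  have hd1 : (0:ℝ) ≤ dist (γ t) (γ 1) := dist_nonneg
  have hdd : (0:ℝ) ≤ dist (γ t) (γ₀ t) := dist_nonneg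
  have hε0 := hε.1
  have hε1 := hε.2
  have hsq : dist (γ t) (γ₀ t) ^ 2 ≤ (2 * Real.sqrt ε * L) ^ 2 := by
    have hs : Real.sqrt ε ^ 2 = ε := Real.sq_sqrt hε0.le
    have hCsq : (L - ε * L) ^ 2 ≤ dist (γ 0) (γ 1) ^ 2 := by
      have hnn : (0:ℝ) ≤ L - ε * L := by nlinarith
      nlinarith [dist_nonneg (x := γ 0) (y := γ 1)]
    set A := dist (γ t) (γ 0) with hAdef
    set B := dist (γ t) (γ 1) with hBdef
    set D := dist (γ 0) (γ 1) with hDdef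
    have h1t : (0:ℝ) ≤ 1 - t := by linarith
    have hA2 : A ^ 2 ≤ ((t + ε) * L) ^ 2 := by
      have : A ≤ (t + ε) * L := by linarith
      exact pow_le_pow_left₀ hd0 this 2
    have hB2 : B ^ 2 ≤ ((1 - t + ε) * L) ^ 2 := by
      have : B ≤ (1 - t + ε) * L := by linarith
      exact pow_le_pow_left₀ hd1 this 2
    have hD2 : ((1 - ε) * L) ^ 2 ≤ D ^ 2 := by
      have h' : (1 - ε) * L ≤ D := by linarith
      exact pow_le_pow_left₀ (mul_nonneg (by linarith) hL.le) h' 2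
    have e1 : (1 - t) * A ^ 2 ≤ (1 - t) * ((t + ε) * L) ^ 2 :=
      mul_le_mul_of_nonneg_left hA2 h1t
    have e2 : t * B ^ 2 ≤ t * ((1 - t + ε) * L) ^ 2 :=
      mul_le_mul_of_nonneg_left hB2 ht0
    have e3 : t * (1 - t) * ((1 - ε) * L) ^ 2 ≤ t * (1 - t) * D ^ 2 :=
      mul_le_mul_of_nonneg_left hD2 (mul_nonneg ht0 h1t)
    have expand : (1 - t) * ((t + ε) * L) ^ 2 + t * ((1 - t + ε) * L) ^ 2
        - t * (1 - t) * ((1 - ε) * L) ^ 2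
        = (6 * ε * (t * (1 - t)) + ε ^ 2 * (1 - t * (1 - t))) * L ^ 2 := by ring
    have hrhs : (2 * Real.sqrt ε * L) ^ 2 = 4 * ε * L ^ 2 := by
      rw [mul_pow, mul_pow, hs]; ring
    have htri : t * (1 - t) ≤ 1 / 4 := by nlinarith [sq_nonneg (2 * t - 1)]
    have hu : 0 ≤ t * (1 - t) := mul_nonneg ht0 h1t
    have heps : ε ^ 2 ≤ ε := by nlinarith
    have e4 : (6 * ε * (t * (1 - t)) + ε ^ 2 * (1 - t * (1 - t))) * L ^ 2
        ≤ 4 * ε * L ^ 2 := by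
      have hL2 : (0:ℝ) < L ^ 2 := by positivity
      have : 6 * ε * (t * (1 - t)) + ε ^ 2 * (1 - t * (1 - t)) ≤ 4 * ε := by
        nlinarith [mul_nonneg hε0.le hu, mul_nonneg (sq_nonneg ε) hu]
      nlinarith
    rw [hrhs]
    linarith [key, e1, e2, e3, expand ▸ e4]
  calc dist (γ t) (γ₀ t) = Real.sqrt (dist (γ t) (γ₀ t) ^ 2) := (Real.sqrt_sq hdd).symm
    _ ≤ Real.sqrt ((2 * Real.sqrt ε * L) ^ 2) := Real.sqrt_le_sqrt hsq
    _ = 2 * Real.sqrt ε * L := Real.sqrt_sq (by positivity)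
end
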